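/- Let K be the attractor of the IFS f_j(x) = λx + d_j on ℝ, j = 1,...,ℓ, with 0 < λ < 1 and 0 = d₁ < d₂ < ... < d_ℓ, and suppose K has positive Lebesgue measure. Then liminf_{n→∞} L(K ∩ [0, λⁿ))/λⁿ ≥ c for some constant c > 0, where L denotes Lebesgue measure. -/

import Mathlib

/-!
Since `d₁ = 0`, the attractor is invariant under `x ↦ λx`, and since all `d_j ≥ 0` it lies in
some `[0, r)`. Choosing `m` with `λᵐ r ≤ 1`, the copy `λⁿ⁺ᵐ K` lies in `K ∩ [0, λⁿ)`, so
`L(K ∩ [0, λⁿ)) ≥ λⁿ⁺ᵐ L(K)`, i.e. the ratio is at least `c = λᵐ L(K)` for every `n`.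
-/

open MeasureTheory Filter Set Pointwise
open scoped ENNReal

section SelfSimilar

variable {ι : Type*} {K : Set ℝ} {lam : ℝ} {d : ι → ℝ}

lemma smul_subset_of_eq_iUnion_image (hK : K = ⋃ j, (fun x => lam * x + d j) '' K)
    {j₀ : ι} (hj₀ : d j₀ = 0) : lam • K ⊆ K := by
  rintro _ ⟨x, hx, rfl⟩
  rw [hK]
  exact mem_iUnion.mpr ⟨j₀, x, hx, by simp [hj₀]⟩

lemma pow_smul_subset_of_smul_subset (h : lam • K ⊆ K) (n : ℕ) : lam ^ n • K ⊆ K := by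
  induction n with
  | zero => simp
  | succ n ih =>
    calc lam ^ (n + 1) • K = lam ^ n • lam • K := by rw [pow_succ, mul_smul]
      _ ⊆ lam ^ n • K := smul_set_mono h
      _ ⊆ K := ih

/-- The minimum `a` of `K` is `λy + d_j ≥ λa` for some `y ∈ K`, forcing `a ≥ 0`. -/
lemma IsCompact.subset_Ici_zero_of_subset_iUnion_image (hKc : IsCompact K) (hlam0 : 0 ≤ lam)
    (hlam1 : lam < 1) (hd : ∀ j, 0 ≤ d j) (hK : K ⊆ ⋃ j, (fun x => lam * x + d j) '' K) :
    K ⊆ Ici 0 := by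
  rcases K.eq_empty_or_nonempty with rfl | hKne
  · exact empty_subset _
  obtain ⟨a, haK, hmin⟩ := hKc.exists_isMinOn hKne continuousOn_id
  obtain ⟨j, y, hyK, hya⟩ := mem_iUnion.mp (hK haK)
  have hay : a ≤ y := hmin hyK
  have ha0 : 0 ≤ a := by
    have := hd j
    simp only at hya
    nlinarith
  exact fun x hx => ha0.trans (hmin hx)

end SelfSimilar

lemma ofReal_mul_volume_le_volume_inter_Ico {K : Set ℝ} {s r : ℝ} (hs : 0 < s)
    (hKr : K ⊆ Ico 0 r) (hsK : s • K ⊆ K) :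
    ENNReal.ofReal s * volume K ≤ volume (K ∩ Ico 0 (s * r)) := by
  have hsub : s • K ⊆ K ∩ Ico 0 (s * r) := by
    rintro _ ⟨x, hx, rfl⟩
    obtain ⟨hx0, hxr⟩ := hKr hx
    exact ⟨hsK ⟨x, hx, rfl⟩, mul_nonneg hs.le hx0, mul_lt_mul_of_pos_left hxr hs⟩
  calc ENNReal.ofReal s * volume K = volume (s • K) := by
        rw [Measure.addHaar_smul, Module.finrank_self, pow_one, abs_of_pos hs]
    _ ≤ volume (K ∩ Ico 0 (s * r)) := measure_mono hsub

lemma ofReal_pow_mul_volume_le_volume_inter_Ico_div {K : Set ℝ} {lam R : ℝ} {m : ℕ}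
    (hlam : 0 < lam) (hKR : K ⊆ Ico 0 R) (hmR : lam ^ m * R ≤ 1) (hK : lam • K ⊆ K) (n : ℕ) :
    ENNReal.ofReal (lam ^ m) * volume K ≤
      volume (K ∩ Ico 0 (lam ^ n)) / ENNReal.ofReal (lam ^ n) := by
  have hn : 0 < lam ^ n := pow_pos hlam n
  rw [ENNReal.le_div_iff_mul_le (.inl (ENNReal.ofReal_pos.mpr hn).ne') (.inl ENNReal.ofReal_ne_top)]
  calc ENNReal.ofReal (lam ^ m) * volume K * ENNReal.ofReal (lam ^ n)
      = ENNReal.ofReal (lam ^ (n + m)) * volume K := by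
        rw [pow_add, ENNReal.ofReal_mul hn.le]; ring
    _ ≤ volume (K ∩ Ico 0 (lam ^ (n + m) * R)) :=
        ofReal_mul_volume_le_volume_inter_Ico (pow_pos hlam _) hKR
          (pow_smul_subset_of_smul_subset hK _)
    _ ≤ volume (K ∩ Ico 0 (lam ^ n)) := by
        refine measure_mono (inter_subset_inter_right _ (Ico_subset_Ico_right ?_))
        calc lam ^ (n + m) * R = lam ^ n * (lam ^ m * R) := by ring
          _ ≤ lam ^ n := mul_le_of_le_one_right hn.le hmR

theorem stmt11_general (ℓ : ℕ) (hℓ : 0 < ℓ) (lam : ℝ) (hlam : 0 < lam) (hlam1 : lam < 1)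
    (d : Fin ℓ → ℝ) (hd0 : d ⟨0, hℓ⟩ = 0) (hdmono : StrictMono d)
    (K : Set ℝ) (hKc : IsCompact K)
    (hKattr : K = ⋃ j : Fin ℓ, (fun x => lam * x + d j) '' K)
    (hKpos : 0 < volume K) :
    ∃ c : ℝ, 0 < c ∧
      ENNReal.ofReal c ≤
        liminf (fun n : ℕ => volume (K ∩ Ico 0 (lam ^ n)) / ENNReal.ofReal (lam ^ n)) atTop := by
  have hd : ∀ j, 0 ≤ d j := fun j => hd0 ▸ hdmono.monotone (Fin.mk_le_of_le_val (Nat.zero_le _))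
  have hK0 := hKc.subset_Ici_zero_of_subset_iUnion_image hlam.le hlam1 hd hKattr.subset
  obtain ⟨r, hr⟩ := hKc.bddAbove
  set R := max r 0 + 1
  have hR : 0 < R := by positivity
  have hKR : K ⊆ Ico 0 R := fun x hx => ⟨hK0 hx, (hr hx).trans_lt (by grind)⟩
  obtain ⟨m, hm⟩ := exists_pow_lt_of_lt_one (one_div_pos.mpr hR) hlam1
  have hmR : lam ^ m * R ≤ 1 := ((lt_div_iff₀ hR).mp hm).le
  have hvol : volume K ≠ ∞ := hKc.measure_lt_top.ne
  refine ⟨lam ^ m * (volume K).toReal,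
    mul_pos (pow_pos hlam m) (ENNReal.toReal_pos hKpos.ne' hvol), ?_⟩
  rw [ENNReal.ofReal_mul (pow_pos hlam m).le, ENNReal.ofReal_toReal hvol]
  exact le_liminf_of_le (by isBoundedDefault) (Eventually.of_forall
    (ofReal_pow_mul_volume_le_volume_inter_Ico_div hlam hKR hmR
      (smul_subset_of_eq_iUnion_image hKattr hd0)))

/-- for the attractor K of the IFS `f_j(x) = λx + d_j` (with `d₁ = 0`)
of positive Lebesgue measure, `liminf_n L(K ∩ [0,λⁿ))/λⁿ ≥ c > 0`. -/
theorem stmt11 (ℓ : ℕ) (hℓ : 0 < ℓ) (lam : ℝ) (hlam : 0 < lam) (hlam1 : lam < 1)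
    (d : Fin ℓ → ℝ) (hd0 : d ⟨0, hℓ⟩ = 0) (hdmono : StrictMono d)
    (K : Set ℝ) (hKne : K.Nonempty) (hKc : IsCompact K)
    (hKattr : K = ⋃ j : Fin ℓ, (fun x => lam * x + d j) '' K)
    (hKpos : 0 < volume K) :
    ∃ c : ℝ, 0 < c ∧
      ENNReal.ofReal c ≤
        liminf (fun n : ℕ => volume (K ∩ Ico 0 (lam ^ n)) / ENNReal.ofReal (lam ^ n)) atTop :=
  stmt11_general ℓ hℓ lam hlam hlam1 d hd0 hdmono K hKc hKattr hKpos
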